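/- Let $I(u) = 2 + u\,\sinh^{-1}(u/2) - \sqrt{4 + u^2}$ for $u \ge 0$. Then $I$ is nonnegative, convex, $I(0) = 0$, and for every $n \ge 0$, $\sum_{k=1}^{\infty} e^{-I(k/(n+1))} \le (n+1) \sum_{k=0}^{\infty} e^{-I(k)}$. -/

import Mathlib

/-!
`I'(u) = arsinh(u/2)` is increasing, and nonnegative for `u ≥ 0`, so `I` is convex and
nondecreasing on `[0, ∞)` with `I(0) = 0`. Monotonicity gives `I((k+1)/(n+1)) ≥ I(⌊k/(n+1)⌋)`,
and every `j` equals `⌊k/(n+1)⌋` for exactly `n + 1` values of `k`, which yields the factor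
`n + 1`. The series converge because `I(u) ≥ u` once `arsinh(u/2) ≥ 2`, e.g. for `u ≥ 8`.
-/

/-- The large deviations rate function of the rate-2 simple symmetric walk. -/
noncomputable def rateI (u : ℝ) : ℝ := 2 + u * Real.arsinh (u / 2) - Real.sqrt (4 + u ^ 2)

open Real Set

theorem HasSum.comp_nat_div {M : Type*} [AddCommMonoid M] [TopologicalSpace M] [ContinuousAdd M]
    {g : ℕ → M} {a : M} (h : HasSum g a) (m : ℕ) [NeZero m] :
    HasSum (fun k => g (k / m)) (m • a) := by
  have hfiber (r : Fin m) : HasSum (fun p : ℕ × Fin m => if p.2 = r then g p.1 else 0) a := by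
    refine ((Prod.mk_left_injective r).hasSum_iff ?_).mp (by simpa [Function.comp_def] using h)
    rintro ⟨j, s⟩ hs
    simp_all [eq_comm]
  have := hasSum_sum (s := Finset.univ) fun r _ => hfiber r
  simp only [Finset.sum_ite_eq, Finset.mem_univ, ↓reduceIte, Finset.sum_const, Finset.card_univ,
    Fintype.card_fin] at this
  exact (Nat.divModEquiv m).hasSum_iff.mpr this

theorem tsum_comp_succ_div_le {f : ℝ → ℝ} (hanti : AntitoneOn f (Ici 0))
    (hnonneg : ∀ x, 0 ≤ x → 0 ≤ f x) (hsum : Summable fun k : ℕ => f k) (n : ℕ) :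
    ∑' k : ℕ, f ((k + 1) / (n + 1)) ≤ (n + 1) * ∑' k : ℕ, f k := by
  have hdiv := hsum.hasSum.comp_nat_div (n + 1)
  have hle (k : ℕ) : f ((k + 1) / (n + 1)) ≤ f ↑(k / (n + 1)) := by
    refine hanti (mem_Ici.mpr (Nat.cast_nonneg _)) (mem_Ici.mpr (by positivity))
      (Nat.cast_div_le.trans ?_)
    push_cast
    gcongr
    linarith
  calc ∑' k : ℕ, f ((k + 1) / (n + 1))
      ≤ ∑' k : ℕ, f ↑(k / (n + 1)) :=
        (hdiv.summable.of_nonneg_of_le (fun k => hnonneg _ (by positivity)) hle).tsum_le_tsum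
          hle hdiv.summable
    _ = (n + 1) * ∑' k : ℕ, f k := by rw [hdiv.tsum_eq, nsmul_eq_mul]; push_cast; rfl

theorem hasDerivAt_rateI (u : ℝ) : HasDerivAt rateI (arsinh (u / 2)) u := by
  have hpos : 0 < 4 + u ^ 2 := by positivity
  have hsqrt : √(4 + u ^ 2) = 2 * √(1 + (u / 2) ^ 2) := by
    rw [show 4 + u ^ 2 = 2 ^ 2 * (1 + (u / 2) ^ 2) by ring, sqrt_mul' _ (by positivity),
      sqrt_sq zero_le_two]
  have harsinh := (hasDerivAt_arsinh (u / 2)).comp u ((hasDerivAt_id u).div_const 2)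
  have hroot := ((hasDerivAt_pow 2 u).const_add 4).sqrt hpos.ne'
  refine ((((hasDerivAt_id u).mul harsinh).const_add 2).sub hroot).congr_deriv ?_
  rw [hsqrt, Function.comp_apply, id]
  field_simp
  ring

theorem differentiable_rateI : Differentiable ℝ rateI :=
  fun u => (hasDerivAt_rateI u).differentiableAt

theorem deriv_rateI : deriv rateI = fun u => arsinh (u / 2) :=
  funext fun u => (hasDerivAt_rateI u).deriv

theorem convexOn_rateI : ConvexOn ℝ univ rateI :=
  Monotone.convexOn_univ_of_deriv differentiable_rateI <| by
    rw [deriv_rateI]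
    exact fun x y hxy => arsinh_le_arsinh.mpr (by linarith)

theorem monotoneOn_rateI : MonotoneOn rateI (Ici 0) := by
  refine monotoneOn_of_deriv_nonneg (convex_Ici 0) differentiable_rateI.continuous.continuousOn
    differentiable_rateI.differentiableOn fun x hx => ?_
  rw [interior_Ici, mem_Ioi] at hx
  rw [deriv_rateI]
  exact arsinh_nonneg_iff.mpr (by linarith)

theorem rateI_zero : rateI 0 = 0 := by
  simp [rateI, show (4 : ℝ) = 2 ^ 2 by norm_num]

theorem rateI_nonneg {u : ℝ} (hu : 0 ≤ u) : 0 ≤ rateI u :=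
  rateI_zero ▸ monotoneOn_rateI self_mem_Ici hu hu

theorem self_le_rateI {u : ℝ} (hu : 8 ≤ u) : u ≤ rateI u := by
  have harsinh : 2 ≤ arsinh (u / 2) := by
    rw [← exp_le_exp, exp_arsinh]
    have hexp : exp 2 < 8 := by
      rw [show (2 : ℝ) = 1 + 1 by norm_num, exp_add]
      nlinarith [exp_one_lt_d9, exp_pos 1]
    have : u / 2 ≤ √(1 + (u / 2) ^ 2) := le_sqrt_of_sq_le (by linarith)
    linarith
  have hsqrt : √(4 + u ^ 2) ≤ 2 + u := sqrt_le_iff.mpr ⟨by linarith, by nlinarith⟩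
  unfold rateI
  nlinarith

theorem summable_exp_neg_rateI_natCast : Summable fun k : ℕ => exp (-rateI k) := by
  rw [← summable_nat_add_iff 8]
  refine summable_exp_neg_nat.of_nonneg_of_le (fun k => (exp_pos _).le) fun k => ?_
  have := self_le_rateI (u := (k + 8 : ℕ)) (by push_cast; linarith [k.cast_nonneg' (α := ℝ)])
  exact exp_le_exp.mpr (by push_cast at this ⊢; linarith)

/-- The rate function `I(u) = 2 + u arsinh(u/2) - √(4+u²)` is nonnegative and convex on
`[0,∞)` with `I(0) = 0`, and for every `n ≥ 0`,
`∑_{k=1}^∞ e^{-I(k/(n+1))} ≤ (n+1) ∑_{k=0}^∞ e^{-I(k)}`. -/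
theorem stmt_11 :
    (∀ u : ℝ, 0 ≤ u → 0 ≤ rateI u) ∧
    ConvexOn ℝ (Set.Ici (0 : ℝ)) rateI ∧
    rateI 0 = 0 ∧
    (∀ n : ℕ,
      ∑' k : ℕ, Real.exp (-rateI (((k : ℝ) + 1) / ((n : ℝ) + 1))) ≤
        ((n : ℝ) + 1) * ∑' k : ℕ, Real.exp (-rateI (k : ℝ))) := by
  have hanti : AntitoneOn (fun u => exp (-rateI u)) (Ici 0) :=
    fun x hx y hy hxy => exp_le_exp.mpr (neg_le_neg (monotoneOn_rateI hx hy hxy))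
  exact ⟨fun u => rateI_nonneg, convexOn_rateI.subset (subset_univ _) (convex_Ici 0), rateI_zero,
    tsum_comp_succ_div_le hanti (fun _ _ => (exp_pos _).le) summable_exp_neg_rateI_natCast⟩
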